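/- Let M be a compact smooth manifold and E a smooth complex vector bundle of constant rank k over M. Then for every point x ∈ M the complex vector space Γ^∞(E)/(I_x·Γ^∞(E)) has dimension exactly k; that is, the module of sections Γ^∞(E) is of constant rank k. -/

import Mathlib

open Bundle Manifold
open scoped TensorProduct

local notation "∞" => (⊤ : ℕ∞)

noncomputable section

/-- Complex multiplication and addition are smooth over `ℝ`, so that the complex-valued smooth
functions on a real manifold form a (comm)ring. -/
instance : ContMDiffRing 𝓘(ℝ, ℂ) ∞ ℂ where
  contMDiff_add := by
    rw [contMDiff_iff]
    refine ⟨continuous_add, fun x y => ?_⟩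
    simp only [mfld_simps]
    exact contDiff_add.contDiffOn
  contMDiff_mul := by
    rw [contMDiff_iff]
    refine ⟨continuous_mul, fun x y => ?_⟩
    simp only [mfld_simps]
    exact contDiff_mul.contDiffOn

variable {EM : Type*} [NormedAddCommGroup EM] [NormedSpace ℝ EM] [FiniteDimensional ℝ EM]
  {HM : Type*} [TopologicalSpace HM] {IM : ModelWithCorners ℝ EM HM}
  {M : Type*} [TopologicalSpace M] [ChartedSpace HM M] [IsManifold IM ∞ M]
  [T2Space M] [SecondCountableTopology M] [CompactSpace M]

/-- The constant functions make the smooth complex-valued functions a `ℂ`-algebra. -/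
instance : Algebra ℂ C^∞⟮IM, M; 𝓘(ℝ, ℂ), ℂ⟯ :=
  RingHom.toAlgebra
    { toFun := fun c => ⟨fun _ => c, contMDiff_const⟩
      map_one' := rfl
      map_mul' := fun _ _ => rfl
      map_zero' := rfl
      map_add' := fun _ _ => rfl }

/-- `I_x`, the ideal of smooth complex-valued functions vanishing at the point `x`. -/
def SmoothMap.idealOfPoint (x : M) : Ideal C^∞⟮IM, M; 𝓘(ℝ, ℂ), ℂ⟯ :=
  RingHom.ker (ContMDiffMap.evalRingHom x : C^∞⟮IM, M; 𝓘(ℝ, ℂ), ℂ⟯ →+* ℂ)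

variable {F : Type*} [NormedAddCommGroup F] [NormedSpace ℂ F] [FiniteDimensional ℂ F]
  {V : M → Type*} [TopologicalSpace (TotalSpace F V)]
  [∀ x, AddCommGroup (V x)] [∀ x, Module ℂ (V x)] [∀ x, TopologicalSpace (V x)]
  [FiberBundle F V] [VectorBundle ℂ F V] [VectorBundle ℝ F V] [ContMDiffVectorBundle ∞ F V IM]

/-- Pointwise scalar multiplication of a smooth section by a smooth function. -/
instance ContMDiffSection.instSMulSmoothMap :
    SMul C^∞⟮IM, M; 𝓘(ℝ, ℂ), ℂ⟯ Cₛ^∞⟮IM; F, V⟯ := by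
  refine ⟨fun f s => ⟨fun x => f x • s x, ?_⟩⟩
  intro x₀
  have hs := s.contMDiff x₀
  have hf : ContMDiffAt IM 𝓘(ℝ, ℂ) ∞ f x₀ := f.contMDiff x₀
  rw [contMDiffAt_section] at hs ⊢
  set e := trivializationAt F V x₀
  have h1 : ContMDiffAt IM 𝓘(ℝ, F →L[ℝ] F) ∞
      (fun x => (ContinuousLinearMap.lsmul ℝ ℂ (f x) : F →L[ℝ] F)) x₀ :=
    ContDiff.comp_contMDiffAt
      (g := ⇑(ContinuousLinearMap.lsmul ℝ ℂ : ℂ →L[ℝ] F →L[ℝ] F))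
      (ContinuousLinearMap.contDiff _) hf
  refine (h1.clm_apply hs).congr_of_eventuallyEq ?_
  refine Filter.eventually_of_mem
    (e.open_baseSet.mem_nhds <| mem_baseSet_trivializationAt F V x₀) ?_
  intro x hx
  simp only [ContinuousLinearMap.lsmul_apply]
  exact (e.linear ℂ hx).2 (f x) (s x)

set_option linter.unusedSectionVars false in
@[simp]
theorem ContMDiffSection.coe_smul_smoothMap (f : C^∞⟮IM, M; 𝓘(ℝ, ℂ), ℂ⟯)
    (s : Cₛ^∞⟮IM; F, V⟯) (x : M) : (f • s) x = f x • s x :=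
  rfl

/-- The smooth sections of a smooth complex vector bundle form a module over the algebra of
smooth complex-valued functions on the base. -/
instance ContMDiffSection.instModuleSmoothMap :
    Module C^∞⟮IM, M; 𝓘(ℝ, ℂ), ℂ⟯ Cₛ^∞⟮IM; F, V⟯ where
  one_smul s := ContMDiffSection.ext fun x => one_smul ℂ (s x)
  mul_smul f g s := ContMDiffSection.ext fun x => mul_smul (f x) (g x) (s x)
  smul_zero f := ContMDiffSection.ext fun x => smul_zero (f x)
  smul_add f s t := ContMDiffSection.ext fun x => smul_add (f x) (s x) (t x)
  add_smul f g s := ContMDiffSection.ext fun x => add_smul (f x) (g x) (s x)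
  zero_smul s := ContMDiffSection.ext fun x => zero_smul ℂ (s x)

instance ContMDiffSection.instModuleComplex : Module ℂ Cₛ^∞⟮IM; F, V⟯ :=
  Module.compHom _ (algebraMap ℂ C^∞⟮IM, M; 𝓘(ℝ, ℂ), ℂ⟯)

instance ContMDiffSection.instIsScalarTowerComplex :
    IsScalarTower ℂ C^∞⟮IM, M; 𝓘(ℝ, ℂ), ℂ⟯ Cₛ^∞⟮IM; F, V⟯ :=
  ⟨fun c f s => by
    show (c • f) • s = algebraMap ℂ C^∞⟮IM, M; 𝓘(ℝ, ℂ), ℂ⟯ c • f • s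
    rw [Algebra.smul_def, mul_smul]⟩


/-! Evaluation at `x` maps `Γ^∞(E)` onto the fibre `E_x`, and its kernel is `I_x · Γ^∞(E)`.
Both facts come from a local frame `eᵢ` of `E` around `x`, cut off by a bump function `χ` with
`χ x = 1`: writing `s = ∑ sⁱ eᵢ` near `x`, every section satisfies
`s = (1 - χ²) s + ∑ (χ sⁱ) (χ eᵢ)`, and when `s x = 0` all the coefficients `1 - χ²` and `χ sⁱ`
vanish at `x`. -/

open Topology

theorem SmoothBumpFunction.exists_tsupport_subset {E H N : Type*} [NormedAddCommGroup E]
    [NormedSpace ℝ E] [FiniteDimensional ℝ E] [TopologicalSpace H] {I : ModelWithCorners ℝ E H}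
    [TopologicalSpace N] [ChartedSpace H N] [T2Space N] {c : N} {s : Set N} (hs : s ∈ 𝓝 c) :
    ∃ f : SmoothBumpFunction I c, tsupport f ⊆ s := by
  obtain ⟨f, -, hf⟩ := (SmoothBumpFunction.nhds_basis_tsupport (I := I) c).mem_iff.1 hs
  exact ⟨f, hf⟩

theorem ContMDiffSection.sum_apply {𝕜 E H B F : Type*} [NontriviallyNormedField 𝕜]
    [NormedAddCommGroup E] [NormedSpace 𝕜 E] [TopologicalSpace H] {I : ModelWithCorners 𝕜 E H}
    [TopologicalSpace B] [ChartedSpace H B] [NormedAddCommGroup F] [NormedSpace 𝕜 F]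
    {n : WithTop ℕ∞} {W : B → Type*} [TopologicalSpace (TotalSpace F W)] [∀ b, AddCommGroup (W b)]
    [∀ b, Module 𝕜 (W b)] [∀ b, TopologicalSpace (W b)] [FiberBundle F W] [VectorBundle 𝕜 F W]
    {ι : Type*} (t : Finset ι) (s : ι → Cₛ^n⟮I; F, W⟯) (b : B) :
    (∑ i ∈ t, s i) b = ∑ i ∈ t, s i b := by
  simp [← coeAddHom_apply, map_sum]

omit [FiniteDimensional ℝ EM] [IsManifold IM ∞ M] [T2Space M] [SecondCountableTopology M]
  [CompactSpace M] in
@[simp]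
theorem SmoothMap.mem_idealOfPoint {x : M} {f : C^∞⟮IM, M; 𝓘(ℝ, ℂ), ℂ⟯} :
    f ∈ idealOfPoint x ↔ f x = 0 :=
  RingHom.mem_ker

namespace ContMDiffSection

variable (IM F V) in
def evalLinearMap (x : M) : Cₛ^∞⟮IM; F, V⟯ →ₗ[ℂ] V x where
  toFun s := s x
  map_add' _ _ := rfl
  map_smul' _ _ := rfl

omit [FiniteDimensional ℝ EM] [IsManifold IM ∞ M] [T2Space M] [SecondCountableTopology M]
  [CompactSpace M] [FiniteDimensional ℂ F] [ContMDiffVectorBundle ∞ F V IM] in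
theorem apply_eq_zero_of_mem_idealOfPoint_smul_top {x : M} {s : Cₛ^∞⟮IM; F, V⟯}
    (hs : s ∈ SmoothMap.idealOfPoint (IM := IM) x •
      (⊤ : Submodule C^∞⟮IM, M; 𝓘(ℝ, ℂ), ℂ⟯ Cₛ^∞⟮IM; F, V⟯)) :
    s x = 0 := by
  refine Submodule.smul_induction_on hs (fun f hf t _ => ?_) fun s t hs ht => ?_
  · change f x • t x = 0
    rw [SmoothMap.mem_idealOfPoint.1 hf, zero_smul]
  · simp [hs, ht]

section CutoffLocalFrame

omit [FiniteDimensional ℝ EM] [IsManifold IM ∞ M] [T2Space M] [SecondCountableTopology M]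
  [CompactSpace M] [VectorBundle ℂ F V]

variable (e : Trivialization F (π F V)) [MemTrivializationAtlas e] {χ : M → ℝ}
  (hχ : ContMDiff IM 𝓘(ℝ, ℝ) ∞ χ) (hχe : tsupport χ ⊆ e.baseSet) {ι : Type*}
  (b : Module.Basis ι ℝ F)

def cutoffLocalFrame (i : ι) : Cₛ^∞⟮IM; F, V⟯ :=
  ⟨χ • e.localFrame b i, hχ.contMDiffOn.smul_section_of_tsupport e.open_baseSet hχe
    (e.contMDiffOn_localFrame_baseSet ∞ b i)⟩

def cutoffLocalFrameCoeff (s : Cₛ^∞⟮IM; F, V⟯) (i : ι) : C^∞⟮IM, M; 𝓘(ℝ, ℂ), ℂ⟯ :=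
  ⟨fun y => ((χ y * e.localFrameCoeff IM b i y (s y) : ℝ) : ℂ), by
    have hreal : ContMDiff IM 𝓘(ℝ, ℝ) ∞ fun y => χ y * e.localFrameCoeff IM b i y (s y) :=
      contMDiff_of_tsupport fun y hy => (hχ y).mul <| contMDiffAt_localFrameCoeff b
        (hχe (tsupport_mul_subset_left hy)) s.contMDiff.contMDiffAt i
    exact Complex.ofRealCLM.contDiff.comp_contMDiff hreal⟩

omit [FiniteDimensional ℂ F] in
@[simp]
theorem cutoffLocalFrame_apply (i : ι) (y : M) :
    cutoffLocalFrame e hχ hχe b i y = χ y • e.localFrame b i y :=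
  rfl

@[simp]
theorem cutoffLocalFrameCoeff_apply (s : Cₛ^∞⟮IM; F, V⟯) (i : ι) (y : M) :
    cutoffLocalFrameCoeff e hχ hχe b s i y =
      ((χ y * e.localFrameCoeff IM b i y (s y) : ℝ) : ℂ) :=
  rfl

omit [FiniteDimensional ℂ F] in
theorem mul_smul_eq_sum_cutoffLocalFrame [Fintype ι] (s : Π y, V y) (y : M) :
    (χ y * χ y) • s y = ∑ i, (χ y * e.localFrameCoeff IM b i y (s y)) •
      cutoffLocalFrame e hχ hχe b i y := by
  by_cases hy : y ∈ e.baseSet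
  · conv_lhs => rw [e.eq_sum_localFrameCoeff_smul (I := IM) (b := b) hy (s := s)]
    simp only [Finset.smul_sum, smul_smul, cutoffLocalFrame_apply]
    exact Finset.sum_congr rfl fun i _ => by rw [mul_right_comm]
  · simp [image_eq_zero_of_notMem_tsupport fun h => hy (hχe h)]

end CutoffLocalFrame

theorem mem_idealOfPoint_smul_top_of_apply_eq_zero {x : M} {s : Cₛ^∞⟮IM; F, V⟯} (hs : s x = 0) :
    s ∈ SmoothMap.idealOfPoint (IM := IM) x •
      (⊤ : Submodule C^∞⟮IM, M; 𝓘(ℝ, ℂ), ℂ⟯ Cₛ^∞⟮IM; F, V⟯) := by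
  set e := trivializationAt F V x
  obtain ⟨χ, hχe⟩ := SmoothBumpFunction.exists_tsupport_subset (I := IM)
    (e.open_baseSet.mem_nhds (mem_baseSet_trivializationAt F V x))
  let b := Module.Basis.ofVectorSpace ℝ F
  set ψ : C^∞⟮IM, M; 𝓘(ℝ, ℂ), ℂ⟯ :=
    ⟨fun y => (χ y : ℂ), Complex.ofRealCLM.contDiff.comp_contMDiff χ.contMDiff⟩
  have hψ (y : M) : ψ y = χ y := rfl
  have hdecomp : s = (1 - ψ * ψ) • s + ∑ i, cutoffLocalFrameCoeff e χ.contMDiff hχe b s i •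
      cutoffLocalFrame e χ.contMDiff hχe b i := by
    ext y
    have hχs := mul_smul_eq_sum_cutoffLocalFrame e χ.contMDiff hχe b s y
    simp only [cutoffLocalFrame_apply] at hχs
    have hcoeff : (1 - ψ * ψ) y = 1 - ((χ y * χ y : ℝ) : ℂ) := by simp [hψ]
    rw [coe_add, Pi.add_apply, coe_smul_smoothMap, sum_apply, hcoeff, sub_smul, one_smul]
    simp only [coe_smul_smoothMap, cutoffLocalFrameCoeff_apply, cutoffLocalFrame_apply,
      Complex.coe_smul]
    rw [← hχs, sub_add_cancel]
  rw [hdecomp]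
  refine add_mem (Submodule.smul_mem_smul ?_ trivial)
    (sum_mem fun i _ => Submodule.smul_mem_smul ?_ trivial)
  · simp [hψ]
  · simp [hs]

omit [SecondCountableTopology M] [CompactSpace M] in
theorem evalLinearMap_surjective (x : M) : Function.Surjective (evalLinearMap IM F V x) := by
  intro v
  set e := trivializationAt F V x
  have hx : x ∈ e.baseSet := mem_baseSet_trivializationAt F V x
  obtain ⟨χ, hχe⟩ := SmoothBumpFunction.exists_tsupport_subset (I := IM)
    (e.open_baseSet.mem_nhds hx)
  let b := Module.Basis.ofVectorSpace ℝ F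
  refine ⟨∑ i, (e.basisAt b hx).repr v i • cutoffLocalFrame e χ.contMDiff hχe b i, ?_⟩
  conv_rhs => rw [← (e.basisAt b hx).sum_repr v]
  simp [evalLinearMap, hx]

theorem ker_evalLinearMap (x : M) :
    LinearMap.ker (evalLinearMap IM F V x) = (SmoothMap.idealOfPoint (IM := IM) x •
      (⊤ : Submodule C^∞⟮IM, M; 𝓘(ℝ, ℂ), ℂ⟯ Cₛ^∞⟮IM; F, V⟯)).restrictScalars ℂ := by
  ext s
  exact ⟨mem_idealOfPoint_smul_top_of_apply_eq_zero, apply_eq_zero_of_mem_idealOfPoint_smul_top⟩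

def quotientIdealOfPointSMulTopEquiv (x : M) :
    (Cₛ^∞⟮IM; F, V⟯ ⧸ SmoothMap.idealOfPoint (IM := IM) x •
      (⊤ : Submodule C^∞⟮IM, M; 𝓘(ℝ, ℂ), ℂ⟯ Cₛ^∞⟮IM; F, V⟯)) ≃ₗ[ℂ] V x :=
  (Submodule.Quotient.restrictScalarsEquiv ℂ _).symm ≪≫ₗ
    Submodule.quotEquivOfEq _ _ (ker_evalLinearMap x).symm ≪≫ₗ
    (evalLinearMap IM F V x).quotKerEquivOfSurjective (evalLinearMap_surjective x)

end ContMDiffSection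

/-- The module of sections of a smooth complex vector bundle of constant rank `k` over a compact
manifold has constant rank `k`: every quotient `Γ^∞(E)/(I_x · Γ^∞(E))` has dimension `k`. -/
theorem sections_constant_rank (k : ℕ) (hk : ∀ x : M, Module.finrank ℂ (V x) = k) (x : M) :
    FiniteDimensional ℂ (Cₛ^∞⟮IM; F, V⟯ ⧸
      (SmoothMap.idealOfPoint (IM := IM) x • (⊤ : Submodule C^∞⟮IM, M; 𝓘(ℝ, ℂ), ℂ⟯ Cₛ^∞⟮IM; F, V⟯))) ∧
    Module.finrank ℂ (Cₛ^∞⟮IM; F, V⟯ ⧸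
      (SmoothMap.idealOfPoint (IM := IM) x • (⊤ : Submodule C^∞⟮IM, M; 𝓘(ℝ, ℂ), ℂ⟯ Cₛ^∞⟮IM; F, V⟯))) = k := by
  have := VectorBundle.finiteDimensional ℂ F V x
  let φ := ContMDiffSection.quotientIdealOfPointSMulTopEquiv (IM := IM) (F := F) (V := V) x
  exact ⟨φ.symm.finiteDimensional, φ.finrank_eq.trans (hk x)⟩

end
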